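/- arXiv:2312.02527 — 3 statements merged into one kernel-verified Lean document; each statement's English description precedes it below -/
import Mathlib

section
/- Let (X̂, d) be a compact metric space, Z ⊆ X̂ a closed subset, and M = X̂ \ Z. Suppose M admits a CW-complex structure all of whose cells have dimension at most n, and suppose that for every δ > 0 there is a homotopy H : X̂ × [0,1] → X̂ with H(x,0) = x for all x ∈ X̂, with H(x,t) ∈ M for all x ∈ X̂ and all t > 0, and with d(H(x,t), x) < δ for all x ∈ X̂ and t ∈ [0,1] (i.e., X̂ can be instantly homotoped off of Z by arbitrarily short homotopies). Then M, equipped with the restriction of the metric d, is controlled n-dominated: for every ε > 0 there exist a finite CW complex K all of whose cells have dimension at most n, continuous maps p : K → M and g : M → K, and a homotopy h : M × [0,1] → M with h(x,0) = p(g(x)), h(x,1) = x, and d(h(x,t), x) < ε for all x ∈ M and t ∈ [0,1]. -/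
/-!
Statement 0: A space `M = X̂ \ Z` (with `X̂` compact metric, `Z` closed) that admits a
CW structure with cells of dimension at most `n`, and such that `X̂` can be instantly
homotoped off of `Z` by arbitrarily short homotopies, is controlled `n`-dominated.

Finite CW complexes of dimension at most `n` are expressed using Mathlib's `CWComplex`
(an expanding sequence of skeleta, where `sk (k+1)` is obtained from `sk k` by attaching
`k`-cells): the cell-index types of `attachCells k` must be empty for `k > n` (dimension
at most `n`) and finite for all `k` (finitely many cells).
-/

open unitInterval

open CategoryTheory

namespace RelativeCWComplex

/-- The `n`-dimensional sphere (old Mathlib definition, indexed by `ℤ`). -/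
noncomputable def sphere (n : ℤ) : TopCat.{0} :=
  TopCat.of <| ULift <| Metric.sphere (0 : EuclideanSpace ℝ <| Fin <| (n + 1).toNat) 1

/-- The `n`-dimensional closed disk (old Mathlib definition, indexed by `ℤ`). -/
noncomputable def disk (n : ℤ) : TopCat.{0} :=
  TopCat.of <| ULift <| Metric.closedBall (0 : EuclideanSpace ℝ <| Fin <| n.toNat) 1

/-- The inclusion map from the `n`-sphere to the `(n + 1)`-disk. -/
def sphereInclusion (n : ℤ) : sphere n ⟶ disk (n + 1) :=
  TopCat.ofHom
    { toFun := fun x ↦ ⟨⟨x.down.1, Metric.sphere_subset_closedBall x.down.2⟩⟩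
      continuous_toFun := by
        fun_prop }

/-- The inclusion map from the disjoint union of `n`-spheres to the disjoint union of
`(n + 1)`-disks, where both of the disjoint unions are indexed by `cells`. -/
noncomputable def sigmaSphereInclusion (n : ℤ) (cells : Type) :
    (∐ fun (_ : cells) ↦ sphere n) ⟶ (∐ fun (_ : cells) ↦ disk (n + 1)) :=
  Limits.Sigma.map fun _ ↦ sphereInclusion n

/-- Given an attaching map for each `n`-sphere, the attaching map for the disjoint
union of the `n`-spheres. -/
noncomputable def sigmaAttachMap (X : TopCat) (n : ℤ) (cells : Type)
    (attachMaps : cells → (sphere n ⟶ X)) : (∐ fun (_ : cells) ↦ sphere n) ⟶ X :=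
  Limits.Sigma.desc attachMaps

/-- A type witnessing that `X'` is obtained from `X` by attaching `(n + 1)`-disks -/
structure AttachCells (X X' : TopCat) (n : ℤ) where
  /-- The index type over `(n + 1)`-disks -/
  cells : Type
  /-- For each `(n + 1)`-disk, an attaching map from its boundary to `X`. -/
  attachMaps : cells → (sphere n ⟶ X)
  /-- `X'` is the pushout of `∐ Sⁿ ⟶ X` and `∐ Sⁿ ⟶ ∐ Dⁿ⁺¹`. -/
  iso_pushout : X' ≅ Limits.pushout (sigmaSphereInclusion n cells)
    (sigmaAttachMap X n cells attachMaps)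

end RelativeCWComplex

/-- A relative CW-complex (old Mathlib definition). -/
structure RelativeCWComplex where
  /-- The skeletons. -/
  sk : ℕ → TopCat
  /-- Each `sk (n + 1)` is obtained from `sk n` by attaching `n`-disks. -/
  attachCells (n : ℕ) : RelativeCWComplex.AttachCells (sk n) (sk (n + 1)) (n - 1)

/-- A CW-complex is a relative CW-complex whose `sk 0` is empty (old Mathlib definition). -/
structure CWComplex extends RelativeCWComplex where
  /-- `sk 0` is empty. -/
  isEmpty_sk_zero : IsEmpty (sk 0)

namespace RelativeCWComplex

/-- The inclusion map from `X` to `X'`. -/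
noncomputable def AttachCells.inclusion (X X' : TopCat) (n : ℤ) (att : AttachCells X X' n) :
    X ⟶ X' :=
  Limits.pushout.inr _ _ ≫ att.iso_pushout.inv

/-- The inclusion map from `sk n` to `sk (n+1)`. -/
noncomputable def skInclusion (X : RelativeCWComplex) (n : ℕ) : X.sk n ⟶ X.sk (n + 1) :=
  AttachCells.inclusion (X.sk n) (X.sk (n + 1)) (n - 1) (X.attachCells n)

/-- The topology on a relative CW-complex. -/
noncomputable def toTopCat (X : RelativeCWComplex) : TopCat :=
  Limits.colimit (Functor.ofSequence (skInclusion X))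

end RelativeCWComplex

/-!
A compact subset of a finite-dimensional CW complex lies in a finite subcomplex, because it meets
only finitely many open cells, and so do the attaching images of those cells.

Given `ε`, the push-off `H` moves all of `X̂` into `M` at time `1` along tracks shorter than `ε`.
If `K` is a finite subcomplex of `M` containing the compact set `H (X̂, 1)`, `p : K → M` is the
inclusion and `g = H (·, 1) : M → K`, then `t ↦ H (·, 1 - t)` is an `ε`-homotopy from `p ∘ g` to
the identity.
-/

open Set Function Limits RelativeCWComplex
open Topology (IsClosedEmbedding IsEmbedding)

universe u v

theorem Topology.IsEmbedding.exists_lift_of_range_subset {W X Y : Type*} [TopologicalSpace W]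
    [TopologicalSpace X] [TopologicalSpace Y] {f : C(X, Y)} (hf : IsEmbedding f) {u : C(W, Y)}
    (hu : range u ⊆ range f) : ∃ v : C(W, X), ∀ w, f (v w) = u w := by
  choose v hv using fun w => hu ⟨w, rfl⟩
  exact ⟨⟨v, hf.continuous_iff.mpr (by simpa only [comp_def, hv] using u.continuous)⟩, hv⟩

section

variable {S D Y : Type u} [TopologicalSpace S] [TopologicalSpace D] [TopologicalSpace Y]
  {ι : Type u} (g : C(S, D)) (A : ι → C(S, Y))

/-- The space obtained from `Y` by attaching copies of `D` along `A i : S → Y` (for injective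
`g : S → D`) is encoded as the quotient of `Y ⊕ Σ _ : ι, D` by the kernel of this map, which sends
a boundary point `g s` of the `i`-th copy to `A i s` and fixes every other point. -/
noncomputable def adjunctionNormalForm : Y ⊕ (Σ _ : ι, D) → Y ⊕ (Σ _ : ι, D)
  | .inl y => .inl y
  | .inr ⟨i, d⟩ => open Classical in
      if h : ∃ s, g s = d then .inl (A i h.choose) else .inr ⟨i, d⟩

abbrev AdjunctionSpace : Type u :=
  Quotient (Setoid.ker (adjunctionNormalForm g A))

namespace AdjunctionSpace

noncomputable def base : C(Y, AdjunctionSpace g A) :=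
  ⟨fun y => Quotient.mk _ (.inl y), continuous_quotient_mk'.comp continuous_inl⟩

noncomputable def cell (i : ι) : C(D, AdjunctionSpace g A) :=
  ⟨fun d => Quotient.mk _ (.inr ⟨i, d⟩),
    continuous_quotient_mk'.comp (continuous_inr.comp continuous_sigmaMk)⟩

variable {g A}

theorem base_apply (y : Y) : base g A y = Quotient.mk _ (.inl y) := rfl

theorem cell_apply (i : ι) (d : D) : cell g A i d = Quotient.mk _ (.inr ⟨i, d⟩) := rfl

theorem mk_eq_mk {a b : Y ⊕ (Σ _ : ι, D)} :
    (Quotient.mk _ a : AdjunctionSpace g A) = Quotient.mk _ b ↔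
      adjunctionNormalForm g A a = adjunctionNormalForm g A b :=
  Quotient.eq.trans Setoid.ker_def

theorem base_injective : Injective (base g A) := fun _ _ h => by
  simpa [base_apply, mk_eq_mk, adjunctionNormalForm] using h

theorem cell_apply_boundary (hg : Injective g) (i : ι) (s : S) :
    cell g A i (g s) = base g A (A i s) := by
  have h : ∃ s', g s' = g s := ⟨s, rfl⟩
  simp only [cell_apply, base_apply, mk_eq_mk, adjunctionNormalForm, dif_pos h, hg h.choose_spec]

theorem cell_ne_base {i : ι} {d : D} (hd : d ∉ range g) (y : Y) : cell g A i d ≠ base g A y := by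
  simp [cell_apply, base_apply, mk_eq_mk, adjunctionNormalForm, show ¬∃ s, g s = d from hd]

theorem cell_eq_cell_iff {i j : ι} {d d' : D} (hd : d ∉ range g) (hd' : d' ∉ range g) :
    cell g A i d = cell g A j d' ↔ i = j ∧ d = d' := by
  simp [cell_apply, mk_eq_mk, adjunctionNormalForm, show ¬∃ s, g s = d from hd,
    show ¬∃ s, g s = d' from hd']

theorem eq_base_or_eq_cell (hg : Injective g) (z : AdjunctionSpace g A) :
    (∃ y, z = base g A y) ∨ ∃ i, ∃ d ∉ range g, z = cell g A i d := by
  induction z using Quotient.ind with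
  | _ a =>
    rcases a with y | ⟨i, d⟩
    · exact .inl ⟨y, rfl⟩
    · by_cases hd : d ∈ range g
      · obtain ⟨s, rfl⟩ := hd
        exact .inl ⟨A i s, cell_apply_boundary hg i s⟩
      · exact .inr ⟨i, d, hd, rfl⟩

theorem isClosed_iff {T : Set (AdjunctionSpace g A)} :
    IsClosed T ↔ IsClosed (base g A ⁻¹' T) ∧ ∀ i, IsClosed (cell g A i ⁻¹' T) := by
  rw [← isQuotientMap_quotient_mk'.isClosed_preimage, isClosed_sum_iff, isClosed_sigma_iff]
  rfl

theorem preimage_cell (hg : Injective g) (T : Set (AdjunctionSpace g A)) (i : ι) :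
    cell g A i ⁻¹' T = g '' (A i ⁻¹' (base g A ⁻¹' T)) ∪ {d | d ∉ range g ∧ cell g A i d ∈ T} := by
  ext d
  by_cases hd : d ∈ range g
  · obtain ⟨s, rfl⟩ := hd
    simp [cell_apply_boundary hg, hg.eq_iff]
  · simp only [mem_preimage, mem_union, mem_image, mem_ofPred_eq, hd, not_false_eq_true, true_and]
    exact ⟨.inr, fun h => h.elim (fun ⟨s, _, hs⟩ => (hd ⟨s, hs⟩).elim) id⟩

theorem isClosedEmbedding_base (hg : Injective g) (hgc : IsClosedMap g) :
    IsClosedEmbedding (base g A) := by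
  refine .of_continuous_injective_isClosedMap (base g A).continuous base_injective fun T hT => ?_
  refine isClosed_iff.mpr ⟨by rwa [preimage_image_eq _ base_injective], fun i => ?_⟩
  have hint : {d | d ∉ range g ∧ cell g A i d ∈ base g A '' T} = ∅ :=
    eq_empty_of_forall_notMem fun d ⟨hd, y, _, hy⟩ => cell_ne_base hd y hy.symm
  rw [preimage_cell hg, preimage_image_eq _ base_injective, hint, union_empty]
  exact hgc _ (hT.preimage (A i).continuous)

instance [CompactSpace Y] [CompactSpace D] [Finite ι] : CompactSpace (AdjunctionSpace g A) :=
  Quotient.compactSpace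

theorem isClosed_of_subsingleton [T1Space D] (hg : Injective g) (hgc : IsClosedMap g)
    {T : Set (AdjunctionSpace g A)} (hbase : IsClosed (base g A ⁻¹' T))
    (hcell : ∀ i, {d | d ∉ range g ∧ cell g A i d ∈ T}.Subsingleton) : IsClosed T :=
  isClosed_iff.mpr ⟨hbase, fun i => preimage_cell hg T i ▸
    (hgc _ (hbase.preimage (A i).continuous)).union (hcell i).isClosed⟩

section desc

variable {W : Type v} [TopologicalSpace W] (u : C(Y, W)) (v : ι → C(D, W))

theorem sumElim_adjunctionNormalForm (hc : ∀ i s, v i (g s) = u (A i s)) (a : Y ⊕ (Σ _ : ι, D)) :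
    Sum.elim u (fun p => v p.1 p.2) (adjunctionNormalForm g A a) =
      Sum.elim u (fun p => v p.1 p.2) a := by
  rcases a with y | ⟨i, d⟩
  · rfl
  · by_cases h : ∃ s, g s = d
    · simp [adjunctionNormalForm, h, ← hc, h.choose_spec]
    · simp [adjunctionNormalForm, h]

noncomputable def desc (hc : ∀ i s, v i (g s) = u (A i s)) : C(AdjunctionSpace g A, W) where
  toFun := Quotient.lift (Sum.elim u fun p => v p.1 p.2) fun a b (h : _ = _) => by
    rw [← sumElim_adjunctionNormalForm u v hc a, h, sumElim_adjunctionNormalForm u v hc]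
  continuous_toFun :=
    (u.continuous.sumElim (continuous_sigma fun i => (v i).continuous)).quotient_lift _

variable (hc : ∀ i s, v i (g s) = u (A i s))

@[simp] theorem desc_base (y : Y) : desc u v hc (base g A y) = u y := rfl

@[simp] theorem desc_cell (i : ι) (d : D) : desc u v hc (cell g A i d) = v i d := rfl

theorem range_desc (hg : Injective g) :
    range (desc u v hc) = range u ∪ ⋃ i, range (v i) := by
  refine Subset.antisymm ?_ (union_subset ?_ (iUnion_subset fun i => ?_))
  · rintro _ ⟨z, rfl⟩
    rcases eq_base_or_eq_cell hg z with ⟨y, rfl⟩ | ⟨i, d, -, rfl⟩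
    · exact .inl ⟨y, rfl⟩
    · exact .inr (mem_iUnion.mpr ⟨i, d, rfl⟩)
  · rintro _ ⟨y, rfl⟩
    exact ⟨base g A y, rfl⟩
  · rintro _ ⟨d, rfl⟩
    exact ⟨cell g A i d, rfl⟩

theorem desc_injective (hg : Injective g) (hu : Injective u)
    (hv : ∀ i j, ∀ d ∉ range g, ∀ d' ∉ range g, v i d = v j d' → i = j ∧ d = d')
    (huv : ∀ i, ∀ d ∉ range g, ∀ y, v i d ≠ u y) : Injective (desc u v hc) := by
  intro z z' h
  rcases eq_base_or_eq_cell hg z with ⟨y, rfl⟩ | ⟨i, d, hd, rfl⟩ <;>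
    rcases eq_base_or_eq_cell hg z' with ⟨y', rfl⟩ | ⟨i', d', hd', rfl⟩ <;>
    simp only [desc_base, desc_cell] at h
  · rw [hu h]
  · exact (huv i' d' hd' y h.symm).elim
  · exact (huv i d hd y' h).elim
  · obtain ⟨rfl, rfl⟩ := hv i i' d hd d' hd' h
    rfl

end desc

variable (g A) in
noncomputable def baseHomeomorph [IsEmpty ι] : Y ≃ₜ AdjunctionSpace g A where
  toFun := base g A
  invFun := desc (ContinuousMap.id Y) isEmptyElim fun i => isEmptyElim i
  left_inv _ := rfl
  right_inv z := by
    induction z using Quotient.ind with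
    | _ a =>
      rcases a with y | ⟨i, -⟩
      · rfl
      · exact isEmptyElim i
  continuous_toFun := (base g A).continuous
  continuous_invFun := (desc _ _ _).continuous

end AdjunctionSpace

end

namespace AdjunctionSpace

variable {Sc Dc Y : TopCat.{u}} {ι : Type u} (gT : Sc ⟶ Dc) (Att : ι → (Sc ⟶ Y))

noncomputable def pushoutCocone (hg : Injective gT) :
    PushoutCocone (Limits.Sigma.map fun _ : ι => gT) (Limits.Sigma.desc Att) :=
  PushoutCocone.mk (W := TopCat.of (AdjunctionSpace gT.hom fun i => (Att i).hom))
    (Sigma.desc fun i => TopCat.ofHom (cell _ _ i)) (TopCat.ofHom (base _ _)) <| by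
      refine Sigma.hom_ext _ _ fun i => ?_
      simp only [Sigma.ι_map_assoc, colimit.ι_desc, Cofan.mk_ι_app, colimit.ι_desc_assoc]
      ext s
      exact cell_apply_boundary (A := fun i => (Att i).hom) hg i s

noncomputable def isColimitPushoutCocone (hg : Injective gT) :
    IsColimit (pushoutCocone gT Att hg) :=
  PushoutCocone.IsColimit.mk _
    (fun s => TopCat.ofHom (desc s.inr.hom (fun i => (Sigma.ι _ i ≫ s.inl).hom) fun i x => by
      simpa using ConcreteCategory.congr_hom (Sigma.ι _ i ≫= s.condition) x))
    (fun s => Sigma.hom_ext _ _ fun i => by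
      simp only [Sigma.ι_desc_assoc]
      rfl)
    (fun s => by ext; rfl)
    (fun s m hl hr => by
      ext z
      rcases eq_base_or_eq_cell hg z with ⟨y, rfl⟩ | ⟨i, d, -, rfl⟩
      · exact ConcreteCategory.congr_hom hr y
      · simpa using ConcreteCategory.congr_hom (Sigma.ι _ i ≫= hl) d)

noncomputable def isoPushout (hg : Injective gT) :
    pushout (Limits.Sigma.map fun _ : ι => gT) (Limits.Sigma.desc Att) ≅
      TopCat.of (AdjunctionSpace gT.hom fun i => (Att i).hom) :=
  colimit.isoColimitCocone ⟨_, isColimitPushoutCocone gT Att hg⟩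

theorem inr_isoPushout_hom (hg : Injective gT) :
    pushout.inr _ _ ≫ (isoPushout gT Att hg).hom = TopCat.ofHom (base _ _) :=
  colimit.isoColimitCocone_ι_hom _ WalkingSpan.right

end AdjunctionSpace

namespace RelativeCWComplex

instance (n : ℤ) : CompactSpace (sphere n) :=
  inferInstanceAs (CompactSpace (ULift (Metric.sphere _ _)))

instance (n : ℤ) : CompactSpace (disk n) :=
  have := isCompact_iff_compactSpace.mp
    (isCompact_closedBall (0 : EuclideanSpace ℝ (Fin n.toNat)) 1)
  inferInstanceAs (CompactSpace (ULift (Metric.closedBall _ _)))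

instance (n : ℤ) : T2Space (disk n) :=
  inferInstanceAs (T2Space (ULift (Metric.closedBall _ _)))

theorem sphereInclusion_injective (n : ℤ) : Injective (sphereInclusion n) := by
  rintro ⟨⟨p, hp⟩⟩ ⟨⟨q, hq⟩⟩ h
  obtain rfl : p = q := congrArg (fun x => (ULift.down x).1) h
  rfl

theorem sphereInclusion_isClosedMap (n : ℤ) : IsClosedMap (sphereInclusion n) :=
  ((sphereInclusion n).hom.continuous.isClosedEmbedding (sphereInclusion_injective n)).isClosedMap

section AttachCells

variable {X X' : TopCat.{0}} {n : ℤ} (att : AttachCells X X' n)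

noncomputable def AttachCells.iso :
    X' ≅ TopCat.of (AdjunctionSpace (sphereInclusion n).hom fun i => (att.attachMaps i).hom) :=
  att.iso_pushout ≪≫ AdjunctionSpace.isoPushout _ _ (sphereInclusion_injective n)

theorem AttachCells.inclusion_iso_hom :
    AttachCells.inclusion X X' n att ≫ att.iso.hom = TopCat.ofHom (AdjunctionSpace.base _ _) := by
  exact (Category.assoc _ _ _).trans ((pushout.inr _ _ ≫= Iso.inv_hom_id_assoc _ _).trans
    (AdjunctionSpace.inr_isoPushout_hom _ _ _))

theorem AttachCells.isIso_inclusion [IsEmpty att.cells] :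
    IsIso (AttachCells.inclusion X X' n att) := by
  rw [(Iso.eq_comp_inv _).mpr att.inclusion_iso_hom]
  have : IsIso (TopCat.ofHom (AdjunctionSpace.base (sphereInclusion n).hom
      fun i => (att.attachMaps i).hom)) :=
    (TopCat.isoOfHomeo (X := X) (Y := TopCat.of (AdjunctionSpace _ _))
      (AdjunctionSpace.baseHomeomorph _ _)).isIso_hom
  infer_instance

end AttachCells

variable (X : RelativeCWComplex)

noncomputable def skMap {a b : ℕ} (h : a ≤ b) : C(X.sk a, X.sk b) :=
  ((Functor.ofSequence X.skInclusion).map (homOfLE h)).hom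

theorem skMap_succ (k : ℕ) : X.skMap (Nat.le_succ k) = (X.skInclusion k).hom :=
  congr_arg TopCat.Hom.hom (Functor.ofSequence_map_homOfLE_succ _ k)

theorem skInclusion_eq_skMap (k : ℕ) (y : X.sk k) :
    X.skInclusion k y = X.skMap (Nat.le_succ k) y := by
  rw [skMap_succ]

@[simp] theorem skMap_self (a : ℕ) (x : X.sk a) : X.skMap le_rfl x = x := by
  simp [skMap, homOfLE_refl]
  rfl

@[simp] theorem skMap_skMap {a b c : ℕ} (h₁ : a ≤ b) (h₂ : b ≤ c) (x : X.sk a) :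
    X.skMap h₂ (X.skMap h₁ x) = X.skMap (h₁.trans h₂) x :=
  (ConcreteCategory.congr_hom ((Functor.ofSequence X.skInclusion).map_comp _ _) x).symm

abbrev AttachSpace (k : ℕ) : Type :=
  AdjunctionSpace (sphereInclusion ((k : ℤ) - 1)).hom fun i => ((X.attachCells k).attachMaps i).hom

noncomputable def skSuccHomeomorph (k : ℕ) : X.sk (k + 1) ≃ₜ X.AttachSpace k :=
  TopCat.homeoOfIso (X.attachCells k).iso

noncomputable def charMap (k : ℕ) (i : (X.attachCells k).cells) :
    C(disk ((k : ℤ) - 1 + 1), X.sk (k + 1)) :=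
  ((X.skSuccHomeomorph k).symm : C(X.AttachSpace k, X.sk (k + 1))).comp
    (AdjunctionSpace.cell _ _ i)

theorem charMap_apply (k : ℕ) (i : (X.attachCells k).cells) (d : disk ((k : ℤ) - 1 + 1)) :
    X.charMap k i d = (X.skSuccHomeomorph k).symm (AdjunctionSpace.cell _ _ i d) := rfl

theorem skInclusion_apply (k : ℕ) (y : X.sk k) :
    X.skInclusion k y = (X.skSuccHomeomorph k).symm (AdjunctionSpace.base _ _ y) := by
  rw [Homeomorph.eq_symm_apply]
  exact ConcreteCategory.congr_hom (X.attachCells k).inclusion_iso_hom y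

theorem isClosedEmbedding_skInclusion (k : ℕ) : IsClosedEmbedding (X.skInclusion k) := by
  rw [show ⇑(X.skInclusion k) = _ from funext (X.skInclusion_apply k)]
  exact (X.skSuccHomeomorph k).symm.isClosedEmbedding.comp
    (AdjunctionSpace.isClosedEmbedding_base (sphereInclusion_injective _)
      (sphereInclusion_isClosedMap _))

theorem charMap_sphereInclusion (k : ℕ) (i : (X.attachCells k).cells) (s : sphere ((k : ℤ) - 1)) :
    X.charMap k i (sphereInclusion _ s) = X.skInclusion k ((X.attachCells k).attachMaps i s) := by
  rw [skInclusion_apply, charMap_apply,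
    AdjunctionSpace.cell_apply_boundary (sphereInclusion_injective _)]

theorem charMap_ne_skInclusion {k : ℕ} (i : (X.attachCells k).cells) {d : disk ((k : ℤ) - 1 + 1)}
    (hd : d ∉ range (sphereInclusion _)) (y : X.sk k) : X.charMap k i d ≠ X.skInclusion k y := by
  rw [skInclusion_apply, charMap_apply]
  exact (X.skSuccHomeomorph k).symm.injective.ne (AdjunctionSpace.cell_ne_base hd y)

theorem charMap_eq_charMap_iff {k : ℕ} {i j : (X.attachCells k).cells}
    {d d' : disk ((k : ℤ) - 1 + 1)} (hd : d ∉ range (sphereInclusion _))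
    (hd' : d' ∉ range (sphereInclusion _)) :
    X.charMap k i d = X.charMap k j d' ↔ i = j ∧ d = d' := by
  rw [charMap_apply, charMap_apply,
    (X.skSuccHomeomorph k).symm.injective.eq_iff]
  exact AdjunctionSpace.cell_eq_cell_iff hd hd'

theorem eq_skInclusion_or_eq_charMap {k : ℕ} (x : X.sk (k + 1)) :
    (∃ y, x = X.skInclusion k y) ∨
      ∃ i, ∃ d ∉ range (sphereInclusion ((k : ℤ) - 1)), x = X.charMap k i d := by
  obtain ⟨z, rfl⟩ := (X.skSuccHomeomorph k).symm.surjective x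
  simp only [skInclusion_apply, charMap_apply,
    (X.skSuccHomeomorph k).symm.injective.eq_iff]
  exact AdjunctionSpace.eq_base_or_eq_cell (sphereInclusion_injective _) z

theorem isClosedEmbedding_skMap {a b : ℕ} (h : a ≤ b) : IsClosedEmbedding (X.skMap h) := by
  induction b, h using Nat.le_induction with
  | base => rw [show ⇑(X.skMap le_rfl) = id from funext (X.skMap_self a)]; exact .id
  | succ b hab ih =>
    rw [← funext (X.skMap_skMap hab (Nat.le_succ b)), skMap_succ]
    exact (X.isClosedEmbedding_skInclusion b).comp ih

section FiniteDimensional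

variable {X} {m : ℕ}

theorem isEventuallyConstantFrom_ofSequence
    (hm : ∀ k, m ≤ k → IsEmpty (X.attachCells k).cells) :
    (Functor.ofSequence X.skInclusion).IsEventuallyConstantFrom m := by
  intro j f
  rw [Subsingleton.elim f (homOfLE (leOfHom f))]
  induction j, leOfHom f using Nat.le_induction with
  | base =>
    rw [Subsingleton.elim (homOfLE _) (𝟙 m), CategoryTheory.Functor.map_id]
    infer_instance
  | succ j hmj ih =>
    rw [← homOfLE_comp hmj (Nat.le_succ j), Functor.map_comp,
      Functor.ofSequence_map_homOfLE_succ]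
    exact @IsIso.comp_isIso _ _ _ _ _ _ _ (ih (homOfLE hmj))
      (@AttachCells.isIso_inclusion _ _ _ _ (hm j hmj))

theorem isIso_ι_of_le (hm : ∀ k, m ≤ k → IsEmpty (X.attachCells k).cells) {k : ℕ} (hk : m ≤ k) :
    IsIso (colimit.ι (Functor.ofSequence X.skInclusion) k) :=
  (isEventuallyConstantFrom_ofSequence hm).isIso_ι_of_isColimit' (colimit.isColimit _) k
    (homOfLE hk)

noncomputable def skHomeomorph (hm : ∀ k, m ≤ k → IsEmpty (X.attachCells k).cells) :
    X.sk m ≃ₜ X.toTopCat :=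
  TopCat.homeoOfIso
    (@asIso _ _ _ _ (colimit.ι (Functor.ofSequence X.skInclusion) m) (isIso_ι_of_le hm le_rfl))

theorem isClosedEmbedding_ι (hm : ∀ k, m ≤ k → IsEmpty (X.attachCells k).cells) (k : ℕ) :
    IsClosedEmbedding (colimit.ι (Functor.ofSequence X.skInclusion) k) := by
  rcases le_total m k with hk | hk
  · have := isIso_ι_of_le hm hk
    exact (TopCat.homeoOfIso
      (asIso (colimit.ι (Functor.ofSequence X.skInclusion) k))).isClosedEmbedding
  · rw [← colimit.w _ (homOfLE hk)]
    change IsClosedEmbedding (skHomeomorph hm ∘ X.skMap hk)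
    exact (skHomeomorph hm).isClosedEmbedding.comp (X.isClosedEmbedding_skMap hk)

end FiniteDimensional

abbrev Cell : Type := Σ k, (X.attachCells k).cells

/-- The cell `⟨k, i⟩` is attached in passing from `sk k` to `sk (k + 1)`, so its open cell in
`sk b` is empty unless `k + 1 ≤ b`. -/
def openCell (b : ℕ) (c : X.Cell) : Set (X.sk b) :=
  {x | ∃ h : c.1 + 1 ≤ b, ∃ d ∉ range (sphereInclusion ((c.1 : ℤ) - 1)),
    x = X.skMap h (X.charMap c.1 c.2 d)}

def closedCell (b : ℕ) (c : X.Cell) : Set (X.sk b) :=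
  {x | ∃ h : c.1 + 1 ≤ b, ∃ d, x = X.skMap h (X.charMap c.1 c.2 d)}

def attachImage (b : ℕ) (c : X.Cell) : Set (X.sk b) :=
  {x | ∃ h : c.1 ≤ b, ∃ s, x = X.skMap h ((X.attachCells c.1).attachMaps c.2 s)}

variable {X}

theorem openCell_subset_closedCell (b : ℕ) (c : X.Cell) : X.openCell b c ⊆ X.closedCell b c :=
  fun _ ⟨h, d, _, hx⟩ => ⟨h, d, hx⟩

theorem isCompact_closedCell (b : ℕ) (c : X.Cell) : IsCompact (X.closedCell b c) := by
  by_cases h : c.1 + 1 ≤ b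
  · convert isCompact_range ((X.skMap h).continuous.comp (X.charMap c.1 c.2).continuous) using 1
    ext x
    simp [closedCell, h, eq_comm]
  · convert isCompact_empty
    exact eq_empty_of_forall_notMem fun x ⟨h', _⟩ => h h'

theorem isCompact_attachImage (b : ℕ) (c : X.Cell) : IsCompact (X.attachImage b c) := by
  by_cases h : c.1 ≤ b
  · convert isCompact_range ((X.skMap h).continuous.comp
      ((X.attachCells c.1).attachMaps c.2).hom.continuous) using 1
    ext x
    simp [attachImage, h, eq_comm]
  · convert isCompact_empty
    exact eq_empty_of_forall_notMem fun x ⟨h', _⟩ => h h'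

theorem skMap_mem_openCell {a b : ℕ} (hab : a ≤ b) {c : X.Cell} {x : X.sk a}
    (hx : x ∈ X.openCell a c) : X.skMap hab x ∈ X.openCell b c := by
  obtain ⟨h, d, hd, rfl⟩ := hx
  exact ⟨h.trans hab, d, hd, X.skMap_skMap _ _ _⟩

theorem notMem_range_skMap_of_mem_openCell {b k : ℕ} (hkb : k ≤ b) {c : X.Cell} (hkc : k ≤ c.1)
    {x : X.sk b} (hx : x ∈ X.openCell b c) : x ∉ range (X.skMap hkb) := by
  rintro ⟨y, rfl⟩
  obtain ⟨h, d, hd, hy⟩ := hx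
  have hfactor : X.skMap hkb y = X.skMap h (X.skInclusion c.1 (X.skMap hkc y)) := by
    rw [skInclusion_eq_skMap, skMap_skMap, skMap_skMap]
  rw [hfactor] at hy
  exact X.charMap_ne_skInclusion c.2 hd _ ((X.isClosedEmbedding_skMap h).injective hy).symm

theorem eq_of_mem_openCell {b : ℕ} {c c' : X.Cell} {x : X.sk b} (hx : x ∈ X.openCell b c)
    (hx' : x ∈ X.openCell b c') : c = c' := by
  obtain ⟨k, i⟩ := c
  obtain ⟨k', i'⟩ := c'
  rcases lt_trichotomy k k' with hk | rfl | hk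
  · obtain ⟨h, d, -, rfl⟩ := hx
    exact (notMem_range_skMap_of_mem_openCell h (c := ⟨k', i'⟩) hk hx' ⟨_, rfl⟩).elim
  · obtain ⟨h, d, hd, rfl⟩ := hx
    obtain ⟨_, d', hd', hdd'⟩ := hx'
    obtain ⟨rfl, -⟩ := (X.charMap_eq_charMap_iff hd hd').mp
      ((X.isClosedEmbedding_skMap h).injective hdd')
    rfl
  · obtain ⟨h, d, -, rfl⟩ := hx'
    exact (notMem_range_skMap_of_mem_openCell h (c := ⟨k, i⟩) hk hx ⟨_, rfl⟩).elim

end RelativeCWComplex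

namespace CWComplex

variable {X : CWComplex}

theorem exists_mem_openCell {b : ℕ} (x : X.sk b) : ∃ c, x ∈ X.openCell b c := by
  induction b with
  | zero => exact (X.isEmpty_sk_zero.false x).elim
  | succ b ih =>
    rcases X.eq_skInclusion_or_eq_charMap x with ⟨y, rfl⟩ | ⟨i, d, hd, rfl⟩
    · obtain ⟨c, hc⟩ := ih y
      exact ⟨c, X.skInclusion_eq_skMap b y ▸ skMap_mem_openCell _ hc⟩
    · exact ⟨⟨b, i⟩, le_rfl, d, hd, (X.skMap_self _ _).symm⟩

theorem isClosed_of_subsingleton_inter_openCell {b : ℕ} {T : Set (X.sk b)}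
    (hT : ∀ c, (T ∩ X.openCell b c).Subsingleton) : IsClosed T := by
  suffices ∀ a (h : a ≤ b), IsClosed (X.skMap h ⁻¹' T) by
    simpa only [funext (X.skMap_self b), preimage_id'] using this b le_rfl
  intro a
  induction a with
  | zero =>
    have := X.isEmpty_sk_zero
    exact fun h => Subsingleton.elim ∅ (X.skMap h ⁻¹' T) ▸ isClosed_empty
  | succ a ih =>
    intro h
    rw [← (X.skSuccHomeomorph a).symm.isClosed_preimage]
    refine AdjunctionSpace.isClosed_of_subsingleton (sphereInclusion_injective _)
      (sphereInclusion_isClosedMap _) ?_ fun i d₁ ⟨hd₁, h₁⟩ d₂ ⟨hd₂, h₂⟩ => ?_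
    · convert ih (Nat.le_of_succ_le h) using 1
      ext y
      simp [← skInclusion_apply, skInclusion_eq_skMap]
    · simp only [mem_preimage, ← charMap_apply] at h₁ h₂
      have := hT ⟨a, i⟩ ⟨h₁, h, d₁, hd₁, rfl⟩ ⟨h₂, h, d₂, hd₂, rfl⟩
      exact ((X.charMap_eq_charMap_iff hd₁ hd₂).mp
        ((X.isClosedEmbedding_skMap h).injective this)).2

/-- A point of `C` chosen in each open cell that `C` meets gives a subset of `C` meeting every
open cell at most once; all its subsets are then closed, so it is discrete and compact. -/
theorem finite_setOf_inter_openCell_nonempty {b : ℕ} {C : Set (X.sk b)} (hC : IsCompact C) :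
    {c | (C ∩ X.openCell b c).Nonempty}.Finite := by
  choose F hF using fun c : {c | (C ∩ X.openCell b c).Nonempty} => c.2
  have hFinj : Injective F := fun c c' h =>
    Subtype.ext (eq_of_mem_openCell (hF c).2 (h ▸ (hF c').2))
  have hclosed : ∀ T ⊆ range F, IsClosed T := fun T hT =>
    isClosed_of_subsingleton_inter_openCell fun c x hx y hy => by
      obtain ⟨c₁, rfl⟩ := hT hx.1
      obtain ⟨c₂, rfl⟩ := hT hy.1
      rw [hFinj.eq_iff, ← Subtype.val_inj, eq_of_mem_openCell (hF c₁).2 hx.2,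
        eq_of_mem_openCell (hF c₂).2 hy.2]
  have : Finite (range F) := IsCompact.finite
    (hC.of_isClosed_subset (hclosed _ subset_rfl) (range_subset_iff.mpr fun c => (hF c).1))
    (isDiscrete_iff_forall_mem_exists_isClosed.mpr fun T hT =>
      ⟨T, hclosed T hT, inter_eq_left.mpr hT⟩)
  have : Finite {c | (C ∩ X.openCell b c).Nonempty} :=
    .of_injective (fun c => (⟨F c, c, rfl⟩ : range F)) fun c c' h =>
      hFinj (congrArg Subtype.val h)
  exact toFinite _

variable {m : ℕ}

/-- The cells of the smallest subcomplex whose `m`-skeleton contains `C`. -/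
inductive InSpan (C : Set (X.sk m)) : X.Cell → Prop
  | of_mem {c : X.Cell} : (C ∩ X.openCell m c).Nonempty → InSpan C c
  | of_attach {c c' : X.Cell} : InSpan C c' → (X.attachImage m c' ∩ X.openCell m c).Nonempty →
      InSpan C c

theorem InSpan.succ_le {C : Set (X.sk m)} {c : X.Cell} (hc : InSpan C c) : c.1 + 1 ≤ m := by
  cases hc with
  | of_mem h => exact h.some_mem.2.1
  | of_attach _ h => exact h.some_mem.2.1

theorem lt_of_attachImage_inter_openCell_nonempty {c c' : X.Cell}
    (h : (X.attachImage m c' ∩ X.openCell m c).Nonempty) : c.1 < c'.1 := by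
  obtain ⟨_, ⟨hc', s, rfl⟩, hx⟩ := h
  by_contra! hle
  exact notMem_range_skMap_of_mem_openCell hc' hle hx ⟨_, rfl⟩

/-- Downward induction on the dimension: a span cell of dimension at least `m - (d + 1)` meets
`C` or the attaching image of one of the finitely many span cells of dimension at least
`m - d`, and these images are compact. -/
theorem finite_setOf_inSpan {C : Set (X.sk m)} (hC : IsCompact C) : {c | InSpan C c}.Finite := by
  suffices h : ∀ d, {c | InSpan C c ∧ m ≤ c.1 + d}.Finite by
    simpa using h m
  intro d
  induction d with
  | zero =>
    convert finite_empty
    exact eq_empty_of_forall_notMem fun c ⟨hc, hmc⟩ => by have := hc.succ_le; omega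
  | succ d ih =>
    refine (finite_setOf_inter_openCell_nonempty (hC.union
      (ih.isCompact_biUnion fun c _ => isCompact_attachImage m c))).subset ?_
    rintro c ⟨hc, hcd⟩
    cases hc with
    | of_mem h => exact h.mono (inter_subset_inter_left _ subset_union_left)
    | of_attach hc' h =>
      refine h.mono (inter_subset_inter_left _ (subset_union_of_subset_right ?_ _))
      refine subset_biUnion_of_mem (u := fun c => X.attachImage m c) ⟨hc', ?_⟩
      have := lt_of_attachImage_inter_openCell_nonempty h
      omega

def spanSkeleton (C : Set (X.sk m)) (K : ℕ) : Set (X.sk K) :=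
  ⋃ (c) (_ : InSpan C c), X.closedCell K c

variable {C : Set (X.sk m)}

theorem isCompact_spanSkeleton (hC : IsCompact C) (K : ℕ) : IsCompact (spanSkeleton C K) :=
  (finite_setOf_inSpan hC).isCompact_biUnion fun c _ => isCompact_closedCell K c

theorem subset_spanSkeleton : C ⊆ spanSkeleton C m := fun x hx => by
  obtain ⟨c, hc⟩ := exists_mem_openCell x
  exact mem_biUnion (InSpan.of_mem ⟨x, hx, hc⟩) (openCell_subset_closedCell m c hc)

theorem range_attachMaps_subset_spanSkeleton {K : ℕ} {i : (X.attachCells K).cells}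
    (hi : InSpan C ⟨K, i⟩) : range ((X.attachCells K).attachMaps i) ⊆ spanSkeleton C K := by
  rintro _ ⟨s, rfl⟩
  obtain ⟨c, hc⟩ := exists_mem_openCell ((X.attachCells K).attachMaps i s)
  have hKm : K ≤ m := Nat.le_of_succ_le hi.succ_le
  have hc' : InSpan C c := .of_attach hi ⟨_, ⟨hKm, s, rfl⟩, skMap_mem_openCell hKm hc⟩
  exact mem_biUnion hc' (openCell_subset_closedCell K c hc)

theorem spanSkeleton_succ (K : ℕ) :
    spanSkeleton C (K + 1) = X.skInclusion K '' spanSkeleton C K ∪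
      ⋃ (i) (_ : InSpan C ⟨K, i⟩), range (X.charMap K i) := by
  ext x
  simp only [spanSkeleton, closedCell, mem_union, mem_image, mem_iUnion, mem_range,
    mem_ofPred_eq, exists_prop]
  constructor
  · rintro ⟨⟨k, i⟩, hc, h, d, rfl⟩
    rcases Nat.lt_or_eq_of_le (Nat.le_of_succ_le_succ h) with hk | rfl
    · exact .inl ⟨_, ⟨_, hc, hk, d, rfl⟩, by rw [skInclusion_eq_skMap, skMap_skMap]⟩
    · exact .inr ⟨i, hc, d, (X.skMap_self _ _).symm⟩
  · rintro (⟨_, ⟨c, hc, h, d, rfl⟩, rfl⟩ | ⟨i, hi, d, rfl⟩)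
    · exact ⟨c, hc, h.trans (Nat.le_succ K), d, by rw [skInclusion_eq_skMap, skMap_skMap]⟩
    · exact ⟨⟨K, i⟩, hi, le_rfl, d, (X.skMap_self _ _).symm⟩

variable (C)

noncomputable def spanAttachMap (K : ℕ) (i : {i // InSpan C ⟨K, i⟩}) :
    C(sphere ((K : ℤ) - 1), spanSkeleton C K) :=
  have hi s : (X.attachCells K).attachMaps i.1 s ∈ spanSkeleton C K :=
    range_attachMaps_subset_spanSkeleton i.2 ⟨s, rfl⟩
  ⟨codRestrict _ _ hi, ((X.attachCells K).attachMaps i.1).hom.continuous.codRestrict hi⟩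

abbrev SpanAttachSpace (K : ℕ) : Type :=
  AdjunctionSpace (sphereInclusion ((K : ℤ) - 1)).hom (spanAttachMap C K)

noncomputable def spanAttachSpaceMap (K : ℕ) : C(SpanAttachSpace C K, X.sk (K + 1)) :=
  AdjunctionSpace.desc ((X.skInclusion K).hom.restrict _) (fun i => X.charMap K i.1)
    fun i s => X.charMap_sphereInclusion K i.1 s

theorem injective_spanAttachSpaceMap (K : ℕ) : Injective (spanAttachSpaceMap C K) :=
  AdjunctionSpace.desc_injective _ _ _ (sphereInclusion_injective _)
    ((X.isClosedEmbedding_skInclusion K).injective.comp Subtype.val_injective)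
    (fun i j d hd d' hd' h => by
      obtain ⟨hij, rfl⟩ := (X.charMap_eq_charMap_iff hd hd').mp h
      exact ⟨Subtype.ext hij, rfl⟩)
    (fun i d hd y => X.charMap_ne_skInclusion i.1 hd y)

theorem range_spanAttachSpaceMap (K : ℕ) :
    range (spanAttachSpaceMap C K) = spanSkeleton C (K + 1) := by
  refine (AdjunctionSpace.range_desc _ _ _ (sphereInclusion_injective _)).trans ?_
  rw [spanSkeleton_succ, ContinuousMap.coe_restrict, range_domRestrict, iUnion_subtype]

variable {C}

theorem finite_inSpan (hC : IsCompact C) (K : ℕ) : Finite {i // InSpan C ⟨K, i⟩} :=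
  have := (finite_setOf_inSpan hC).to_subtype
  .of_injective (fun i => (⟨⟨K, i.1⟩, i.2⟩ : {c | InSpan C c})) fun i j h => by
    simpa [Subtype.ext_iff] using h

noncomputable def spanAttachSpaceHomeomorph (hC : IsCompact C) (K : ℕ)
    [T2Space (X.sk (K + 1))] :
    SpanAttachSpace C K ≃ₜ spanSkeleton C (K + 1) :=
  have := isCompact_iff_compactSpace.mp (isCompact_spanSkeleton hC K)
  have := finite_inSpan hC K
  ((spanAttachSpaceMap C K).continuous.isClosedEmbedding
    (injective_spanAttachSpaceMap C K)).isEmbedding.toHomeomorph.trans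
    (.setCongr (range_spanAttachSpaceMap C K))

noncomputable def spanComplex (hC : IsCompact C) [∀ K, T2Space (X.sk K)] : CWComplex where
  sk K := TopCat.of (spanSkeleton C K)
  attachCells K :=
    { cells := {i // InSpan C ⟨K, i⟩}
      attachMaps i := TopCat.ofHom (spanAttachMap C K i)
      iso_pushout := (TopCat.isoOfHomeo (spanAttachSpaceHomeomorph hC K).symm) ≪≫
        (AdjunctionSpace.isoPushout _ _ (sphereInclusion_injective _)).symm }
  isEmpty_sk_zero := ⟨fun x => X.isEmpty_sk_zero.false x.1⟩

theorem exists_finite_subcomplex_superset {X : CWComplex} {m : ℕ}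
    (hm : ∀ k, m ≤ k → IsEmpty (X.attachCells k).cells) [T2Space X.toTopCat]
    {C : Set X.toTopCat} (hC : IsCompact C) :
    ∃ K : CWComplex, (∀ k, Finite (K.attachCells k).cells) ∧
      (∀ k, IsEmpty (X.attachCells k).cells → IsEmpty (K.attachCells k).cells) ∧
      ∃ j : C(K.toTopCat, X.toTopCat), IsEmbedding j ∧ C ⊆ range j := by
  have : T2Space ↑(colimit (Functor.ofSequence X.skInclusion)) := ‹T2Space X.toTopCat›
  have (k : ℕ) : T2Space (X.sk k) := (isClosedEmbedding_ι hm k).isEmbedding.t2Space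
  have hC' : IsCompact ((skHomeomorph hm) ⁻¹' C) := (skHomeomorph hm).isCompact_preimage.mpr hC
  let K := spanComplex hC'
  have hKm : ∀ k, m ≤ k → IsEmpty (K.attachCells k).cells := fun k hk =>
    ⟨fun i => by have : k + 1 ≤ m := i.2.succ_le; omega⟩
  let e : spanSkeleton (skHomeomorph hm ⁻¹' C) m ≃ₜ K.toTopCat := skHomeomorph hKm
  let j : C(K.toTopCat, X.toTopCat) := ⟨fun x => skHomeomorph hm (e.symm x).1,
    (skHomeomorph hm).continuous.comp (continuous_subtype_val.comp e.symm.continuous)⟩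
  refine ⟨K, finite_inSpan hC', fun k _ => ⟨fun i => isEmptyElim i.1⟩, j, ?_, fun x hx => ?_⟩
  · exact (skHomeomorph hm).isEmbedding.comp (IsEmbedding.subtypeVal.comp e.symm.isEmbedding)
  · obtain ⟨y, rfl⟩ := (skHomeomorph hm).surjective x
    exact ⟨e ⟨y, subset_spanSkeleton hx⟩, by simp [j]⟩

end CWComplex

theorem controlled_n_dominated_of_Z_pushoff_general
    (Xhat : Type) [MetricSpace Xhat] [CompactSpace Xhat]
    (Z : Set Xhat) (n : ℕ)
    (hCW : ∃ cw : CWComplex,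
      (∀ k, n < k → IsEmpty (cw.attachCells k).cells) ∧
      Nonempty (↥cw.toRelativeCWComplex.toTopCat ≃ₜ ↥(Zᶜ : Set Xhat)))
    (hpush : ∀ δ : ℝ, 0 < δ → ∃ H : C(Xhat × I, Xhat),
      (∀ x : Xhat, H (x, 0) = x) ∧
      (∀ (x : Xhat) (t : I), 0 < (t : ℝ) → H (x, t) ∉ Z) ∧
      (∀ (x : Xhat) (t : I), dist (H (x, t)) x < δ)) :
    ∀ ε : ℝ, 0 < ε →
      ∃ cwK : CWComplex,
        (∀ k, Finite (cwK.attachCells k).cells) ∧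
        (∀ k, n < k → IsEmpty (cwK.attachCells k).cells) ∧
        ∃ (p : C(↥cwK.toRelativeCWComplex.toTopCat, ↥(Zᶜ : Set Xhat)))
          (g : C(↥(Zᶜ : Set Xhat), ↥cwK.toRelativeCWComplex.toTopCat))
          (h : C(↥(Zᶜ : Set Xhat) × I, ↥(Zᶜ : Set Xhat))),
          (∀ x, h (x, 0) = p (g x)) ∧
          (∀ x, h (x, 1) = x) ∧
          (∀ (x : ↥(Zᶜ : Set Xhat)) (t : I), dist (h (x, t)) x < ε) := by
  obtain ⟨cw, hdim, ⟨φ⟩⟩ := hCW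
  intro ε hε
  obtain ⟨H, hH₀, hHZ, hHdist⟩ := hpush ε hε
  have hHM (x : (Zᶜ : Set Xhat)) (t : I) : H (x, t) ∈ Zᶜ := by
    rcases (unitInterval.nonneg t).eq_or_lt with ht | ht
    · rw [show t = 0 from Subtype.ext ht.symm, hH₀]
      exact x.2
    · exact hHZ x t ht
  let J : C(Xhat, (Zᶜ : Set Xhat)) := ⟨fun x => ⟨H (x, 1), hHZ x 1 one_pos⟩, by fun_prop⟩
  have : T2Space cw.toTopCat := φ.isEmbedding.t2Space
  obtain ⟨K, hfin, hcells, j, hj, hJ⟩ := CWComplex.exists_finite_subcomplex_superset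
    (m := n + 1) (fun k hk => hdim k hk) (isCompact_range (φ.symm.continuous.comp J.continuous))
  obtain ⟨g, hg⟩ := hj.exists_lift_of_range_subset
    (u := ⟨fun x : (Zᶜ : Set Xhat) => φ.symm (J x), by fun_prop⟩)
    (by rintro _ ⟨x, rfl⟩; exact hJ ⟨x, rfl⟩)
  refine ⟨K, hfin, fun k hk => hcells k (hdim k hk), ContinuousMap.comp φ j, g,
    ⟨fun q => ⟨H (q.1, σ q.2), hHM q.1 (σ q.2)⟩, by fun_prop⟩, fun x => ?_, fun x => ?_,
    fun x t => hHdist x (σ t)⟩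
  · simp [hg, J]
  · simp [hH₀]

/-- Let `X̂` be a compact metric space, `Z ⊆ X̂` closed and
`M = X̂ \ Z`.  Assume `M` carries a CW-structure all of whose cells have dimension at
most `n`, and that for every `δ > 0` there is a homotopy `H : X̂ × [0,1] → X̂` with
`H(x,0) = x`, `H(x,t) ∉ Z` for `t > 0`, and `dist (H(x,t)) x < δ`.  Then `M` (with the
restricted metric) is controlled `n`-dominated: for every `ε > 0` there are a finite CW
complex `K` with cells of dimension at most `n`, maps `p : K → M` and `g : M → K`, and a
homotopy `h` from `p ∘ g` to `id_M` all of whose tracks have length less than `ε`. -/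
theorem controlled_n_dominated_of_Z_pushoff
    (Xhat : Type) [MetricSpace Xhat] [CompactSpace Xhat]
    (Z : Set Xhat) (hZ : IsClosed Z) (n : ℕ)
    (hCW : ∃ cw : CWComplex,
      (∀ k, n < k → IsEmpty (cw.attachCells k).cells) ∧
      Nonempty (↥cw.toRelativeCWComplex.toTopCat ≃ₜ ↥(Zᶜ : Set Xhat)))
    (hpush : ∀ δ : ℝ, 0 < δ → ∃ H : C(Xhat × I, Xhat),
      (∀ x : Xhat, H (x, 0) = x) ∧
      (∀ (x : Xhat) (t : I), 0 < (t : ℝ) → H (x, t) ∉ Z) ∧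
      (∀ (x : Xhat) (t : I), dist (H (x, t)) x < δ)) :
    ∀ ε : ℝ, 0 < ε →
      ∃ cwK : CWComplex,
        (∀ k, Finite (cwK.attachCells k).cells) ∧
        (∀ k, n < k → IsEmpty (cwK.attachCells k).cells) ∧
        ∃ (p : C(↥cwK.toRelativeCWComplex.toTopCat, ↥(Zᶜ : Set Xhat)))
          (g : C(↥(Zᶜ : Set Xhat), ↥cwK.toRelativeCWComplex.toTopCat))
          (h : C(↥(Zᶜ : Set Xhat) × I, ↥(Zᶜ : Set Xhat))),
          (∀ x, h (x, 0) = p (g x)) ∧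
          (∀ x, h (x, 1) = x) ∧
          (∀ (x : ↥(Zᶜ : Set Xhat)) (t : I), dist (h (x, t)) x < ε) :=
  controlled_n_dominated_of_Z_pushoff_general Xhat Z n hCW hpush
end

section
/- If an inverse sequence of groups (G_i, λ_i)_{i∈ℕ} is pro-isomorphic to an inverse sequence all of whose bonding homomorphisms are surjective (semistable), and is also pro-isomorphic to an inverse sequence all of whose bonding homomorphisms are injective (pro-monomorphic), then it is stable: it is pro-isomorphic to a constant inverse sequence, i.e., to an inverse sequence consisting of a single group G with all bonding maps the identity. -/
/-!
Statement 4: An inverse sequence of groups that is pro-isomorphic both to a sequence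
with surjective bonds (semistable) and to a sequence with injective bonds
(pro-monomorphic) is stable, i.e. pro-isomorphic to a constant sequence.
-/

/-- An inverse sequence of groups: groups `G 0, G 1, G 2, …` together with bonding
homomorphisms `bond i : G (i+1) →* G i`. -/
structure GroupSeq : Type 1 where
  /-- the terms of the sequence -/
  G : ℕ → Type
  [inst : ∀ i, Group (G i)]
  /-- the bonding homomorphisms -/
  bond : ∀ i, G (i + 1) →* G i

attribute [instance] GroupSeq.inst

/-- The composite bonding homomorphism `G j →* G i` for `i ≤ j`. -/
def GroupSeq.trans (S : GroupSeq) {i j : ℕ} (h : i ≤ j) : S.G j →* S.G i :=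
  Nat.leRecOn h (fun {k} φ => φ.comp (S.bond k)) (MonoidHom.id (S.G i))

/-- A pro-isomorphism between two inverse sequences of groups: strictly increasing index
sequences `ii`, `jj` and homomorphisms `g k : A (ii (k+1)) →* B (jj k)`,
`f k : B (jj k) →* A (ii k)` such that `f k ∘ g k` and `g k ∘ f (k+1)` are the composite
bonding maps. -/
structure ProIso (A B : GroupSeq) where
  /-- indices into the first sequence -/
  ii : ℕ → ℕ
  /-- indices into the second sequence -/
  jj : ℕ → ℕ
  ii_mono : StrictMono ii
  jj_mono : StrictMono jj
  /-- the "downward" homomorphisms -/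
  g : ∀ k, A.G (ii (k + 1)) →* B.G (jj k)
  /-- the "upward" homomorphisms -/
  f : ∀ k, B.G (jj k) →* A.G (ii k)
  fg : ∀ k, (f k).comp (g k) = A.trans (ii_mono.monotone (Nat.le_succ k))
  gf : ∀ k, (g k).comp (f (k + 1)) = B.trans (jj_mono.monotone (Nat.le_succ k))

/-- The constant inverse sequence on a single group `K`, with identity bonding maps. -/
def GroupSeq.const (K : Type) [Group K] : GroupSeq where
  G := fun _ => K
  bond := fun _ => MonoidHom.id K

/- ## Auxiliary lemmas -/

theorem GroupSeq.trans_self (S : GroupSeq) {i : ℕ} (h : i ≤ i) :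
    S.trans h = MonoidHom.id (S.G i) :=
  Nat.leRecOn_self _

theorem GroupSeq.trans_succ (S : GroupSeq) {i j : ℕ} (h : i ≤ j) (h' : i ≤ j + 1) :
    S.trans h' = (S.trans h).comp (S.bond j) :=
  Nat.leRecOn_succ h _

theorem GroupSeq.trans_trans (S : GroupSeq) {i j k : ℕ} (hij : i ≤ j) (hjk : j ≤ k) :
    (S.trans hij).comp (S.trans hjk) = S.trans (hij.trans hjk) := by
  induction k, hjk using Nat.le_induction with
  | base =>
      rw [S.trans_self (le_refl j), MonoidHom.comp_id]
  | succ k hk ih =>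
      rw [S.trans_succ hk (hk.trans k.le_succ), S.trans_succ (hij.trans hk)
        ((hij.trans hk).trans k.le_succ), ← MonoidHom.comp_assoc, ih]

theorem GroupSeq.trans_trans_apply (S : GroupSeq) {i j k : ℕ} (hij : i ≤ j) (hjk : j ≤ k)
    (x : S.G k) : S.trans hij (S.trans hjk x) = S.trans (hij.trans hjk) x := by
  rw [← S.trans_trans hij hjk]; rfl

theorem GroupSeq.trans_surjective (S : GroupSeq) (hS : ∀ i, Function.Surjective (S.bond i))
    {i j : ℕ} (h : i ≤ j) : Function.Surjective (S.trans h) := by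
  induction j, h using Nat.le_induction with
  | base => rw [S.trans_self (le_refl i)]; exact fun x => ⟨x, rfl⟩
  | succ j hj ih =>
      rw [S.trans_succ hj (hj.trans j.le_succ), MonoidHom.coe_comp]
      exact ih.comp (hS j)

theorem GroupSeq.trans_injective (S : GroupSeq) (hS : ∀ i, Function.Injective (S.bond i))
    {i j : ℕ} (h : i ≤ j) : Function.Injective (S.trans h) := by
  induction j, h using Nat.le_induction with
  | base => rw [S.trans_self (le_refl i)]; exact fun x y hxy => hxy
  | succ j hj ih =>
      rw [S.trans_succ hj (hj.trans j.le_succ), MonoidHom.coe_comp]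
      exact ih.comp (hS j)

theorem GroupSeq.const_trans (K : Type) [Group K] {i j : ℕ} (h : i ≤ j) :
    (GroupSeq.const K).trans h = MonoidHom.id K := by
  induction j, h using Nat.le_induction with
  | base => exact (GroupSeq.const K).trans_self (le_refl i)
  | succ j hj ih =>
      rw [(GroupSeq.const K).trans_succ hj (hj.trans j.le_succ), ih]
      rfl

/-- The composite bond `A (ii k) ← A (ii (l+1))` factors as `f k ∘ bond ∘ g l`. -/
theorem ProIso.factor {A B : GroupSeq} (P : ProIso A B) {k l : ℕ} (h : k ≤ l) :
    ∀ (h1 : P.ii k ≤ P.ii (l + 1)) (x : A.G (P.ii (l + 1))),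
      A.trans h1 x = P.f k (B.trans (P.jj_mono.monotone h) (P.g l x)) := by
  induction l, h using Nat.le_induction with
  | base =>
      intro h1 x
      rw [B.trans_self (le_refl (P.jj k))]
      exact (DFunLike.congr_fun (P.fg k) x).symm
  | succ l hl ih =>
      intro h1 x
      have hA1 : P.ii k ≤ P.ii (l + 1) := P.ii_mono.monotone (hl.trans l.le_succ)
      have hA2 : P.ii (l + 1) ≤ P.ii (l + 1 + 1) := P.ii_mono.monotone (Nat.le_succ _)
      have e2 : A.trans hA2 x = P.f (l + 1) (P.g (l + 1) x) :=
        (DFunLike.congr_fun (P.fg (l + 1)) x).symm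
      have e3 : P.g l (P.f (l + 1) (P.g (l + 1) x))
          = B.trans (P.jj_mono.monotone (Nat.le_succ l)) (P.g (l + 1) x) :=
        DFunLike.congr_fun (P.gf l) (P.g (l + 1) x)
      calc A.trans h1 x = A.trans hA1 (A.trans hA2 x) := (A.trans_trans_apply hA1 hA2 x).symm
        _ = P.f k (B.trans (P.jj_mono.monotone hl)
              (P.g l (P.f (l + 1) (P.g (l + 1) x)))) := by rw [e2]; exact ih hA1 _
        _ = P.f k (B.trans (P.jj_mono.monotone (hl.trans l.le_succ)) (P.g (l + 1) x)) := by
              rw [e3, B.trans_trans_apply]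

/-- Index sequence used in the proof of stability. -/
def stableIdx (d : ℕ) : ℕ → ℕ
  | 0 => 1
  | k + 1 => d + k + 1

theorem stableIdx_mono {d : ℕ} (hd : 1 ≤ d) : StrictMono (stableIdx d) := by
  apply strictMono_nat_of_lt_succ
  intro k
  cases k with
  | zero => show 1 < d + 0 + 1; omega
  | succ k => show d + k + 1 < d + (k + 1) + 1; omega

theorem stableIdx_pos {d : ℕ} (k : ℕ) : 1 ≤ stableIdx d k := by
  cases k with
  | zero => exact le_refl 1
  | succ k => show 1 ≤ d + k + 1; omega

theorem stableIdx_le {d : ℕ} (hd : 1 ≤ d) (k : ℕ) : stableIdx d k ≤ d + k := by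
  cases k with
  | zero => exact hd
  | succ k => show d + k + 1 ≤ d + (k + 1); omega

/-- The abstract construction: a sequence with stable images at level `0` and
stable kernels is pro-isomorphic to a constant sequence. -/
theorem stable_construct (A : GroupSeq) (s : ℕ → ℕ) (hs : StrictMono s)
    (Him : ∀ (k : ℕ) (h01 : s 0 ≤ s 1) (h0 : s 0 ≤ s (k + 1)) (y : A.G (s 0)),
      (∃ x, A.trans h01 x = y) → ∃ v, A.trans h0 v = y)
    (Hker : ∀ (k : ℕ) (h0 : s 0 ≤ s (k + 1)) (hk : s k ≤ s (k + 1)) (x : A.G (s (k + 1))),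
      A.trans h0 x = 1 → A.trans hk x = 1) :
    ∃ (K : Type) (instK : Group K), Nonempty (ProIso A (@GroupSeq.const K instK)) := by
  have h01 : s 0 ≤ s 1 := (hs Nat.zero_lt_one).le
  have h0k : ∀ k, s 0 ≤ s k := fun k => hs.monotone (Nat.zero_le k)
  have hk1 : ∀ k, s k ≤ s (k + 1) := fun k => (hs (Nat.lt_succ_self k)).le
  have h1k : ∀ k, s 1 ≤ s (k + 1) := fun k => hs.monotone (Nat.succ_le_succ (Nat.zero_le k))
  -- the stable image
  set R : Subgroup (A.G (s 0)) := (A.trans h01).range with hR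
  -- membership of pushed-down elements in `R`
  have hmem : ∀ (k : ℕ) (x : A.G (s (k + 1))), A.trans (h0k (k + 1)) x ∈ R := by
    intro k x
    refine ⟨A.trans (h1k k) x, ?_⟩
    exact A.trans_trans_apply h01 (h1k k) x
  -- the downward maps
  set g : ∀ k, A.G (s (k + 1)) →* R :=
    fun k => MonoidHom.codRestrict (A.trans (h0k (k + 1))) R (hmem k) with hgdef
  -- the subgroups of stable elements
  set T : ∀ k, Subgroup (A.G (s k)) := fun k => (A.trans (hk1 k)).range with hT
  -- the comparison maps T k →* R
  have hmem' : ∀ (k : ℕ) (x : (T k : Subgroup (A.G (s k)))), A.trans (h0k k) (x : A.G (s k)) ∈ R := by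
    intro k ⟨x, a, ha⟩
    refine ⟨A.trans (h1k k) a, ?_⟩
    show A.trans h01 (A.trans (h1k k) a) = A.trans (h0k k) x
    rw [A.trans_trans_apply h01 (h1k k) a, ← ha, A.trans_trans_apply (h0k k) (hk1 k) a]
  set ε : ∀ k, (T k : Subgroup (A.G (s k))) →* R :=
    fun k => MonoidHom.codRestrict ((A.trans (h0k k)).comp (T k).subtype) R (hmem' k) with hε
  have hbij : ∀ k, Function.Bijective (ε k) := by
    intro k
    constructor
    · -- injective
      intro ⟨x, a, ha⟩ ⟨y, b, hb⟩ hxy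
      have hval : A.trans (h0k k) x = A.trans (h0k k) y := congrArg Subtype.val hxy
      -- reduce to the kernel statement
      have key : ∀ (c : A.G (s (k + 1))), A.trans (h0k k) (A.trans (hk1 k) c) = 1 →
          A.trans (hk1 k) c = 1 := by
        intro c hc
        have : A.trans (h0k (k + 1)) c = 1 := by
          rw [← A.trans_trans_apply (h0k k) (hk1 k) c]; exact hc
        exact Hker k (h0k (k + 1)) (hk1 k) c this
      have hxy1 : A.trans (h0k k) (A.trans (hk1 k) (a * b⁻¹)) = 1 := by
        rw [map_mul, map_mul, map_inv, map_inv, ha, hb, hval]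
        exact mul_inv_cancel _
      have := key (a * b⁻¹) hxy1
      rw [map_mul, map_inv, ha, hb] at this
      apply Subtype.ext
      exact (mul_inv_eq_one.mp this)
    · -- surjective
      intro ⟨y, x, hx⟩
      obtain ⟨v, hv⟩ := Him k h01 (h0k (k + 1)) y ⟨x, hx⟩
      refine ⟨⟨A.trans (hk1 k) v, v, rfl⟩, ?_⟩
      apply Subtype.ext
      show A.trans (h0k k) (A.trans (hk1 k) v) = y
      rw [A.trans_trans_apply (h0k k) (hk1 k) v]
      exact hv
  -- the equivalences
  set E : ∀ k, (T k : Subgroup (A.G (s k))) ≃* R := fun k => MulEquiv.ofBijective (ε k) (hbij k)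
    with hE
  refine ⟨R, inferInstance, ⟨?_⟩⟩
  refine
    { ii := s
      jj := fun k => k
      ii_mono := hs
      jj_mono := strictMono_id
      g := g
      f := fun k => (T k).subtype.comp (E k).symm.toMonoidHom
      fg := ?_
      gf := ?_ }
  · intro k
    ext x
    show (T k).subtype ((E k).symm (g k x)) = A.trans (hs.monotone (Nat.le_succ k)) x
    have key : E k ⟨A.trans (hk1 k) x, x, rfl⟩ = g k x := by
      apply Subtype.ext
      show A.trans (h0k k) (A.trans (hk1 k) x) = A.trans (h0k (k + 1)) x
      exact A.trans_trans_apply (h0k k) (hk1 k) x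
    rw [← key, MulEquiv.symm_apply_apply]
    rfl
  · intro k
    rw [GroupSeq.const_trans]
    ext y
    show g k ((T (k + 1)).subtype ((E (k + 1)).symm y)) = y
    have h2 : E (k + 1) ((E (k + 1)).symm y) = y := MulEquiv.apply_symm_apply _ _
    apply Subtype.ext
    exact congrArg Subtype.val h2

/-- An inverse sequence of groups that is pro-isomorphic to a sequence
all of whose bonding maps are surjective (semistable) and also pro-isomorphic to a
sequence all of whose bonding maps are injective (pro-monomorphic) is stable: it is
pro-isomorphic to a constant inverse sequence (a single group with identity bonds). -/
theorem stable_of_semistable_of_proMono (A : GroupSeq)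
    (hsemi : ∃ B : GroupSeq, (∀ i, Function.Surjective (B.bond i)) ∧ Nonempty (ProIso A B))
    (hmono : ∃ B : GroupSeq, (∀ i, Function.Injective (B.bond i)) ∧ Nonempty (ProIso A B)) :
    ∃ (K : Type) (instK : Group K), Nonempty (ProIso A (@GroupSeq.const K instK)) := by
  obtain ⟨B, hB, ⟨P⟩⟩ := hsemi
  obtain ⟨C, hC, ⟨Q⟩⟩ := hmono
  -- the downward maps of `P` are surjective
  have hg : ∀ l, Function.Surjective (P.g l) := by
    intro l
    have h1 : Function.Surjective (⇑(P.g l) ∘ ⇑(P.f (l + 1))) := by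
      rw [← MonoidHom.coe_comp, P.gf l]
      exact B.trans_surjective hB _
    exact h1.of_comp
  -- the upward maps of `Q` (above level 0) are injective
  have hq : ∀ l, Function.Injective (Q.f (l + 1)) := by
    intro l
    have h1 : Function.Injective (⇑(Q.g l) ∘ ⇑(Q.f (l + 1))) := by
      rw [← MonoidHom.coe_comp, Q.gf l]
      exact C.trans_injective hC _
    exact h1.of_comp
  -- kernel stability along the indices of `Q`
  have hker1 : ∀ (a l : ℕ), 1 ≤ a → a ≤ l → ∀ (h1 : Q.ii a ≤ Q.ii (l + 1))
      (x : A.G (Q.ii (l + 1))), A.trans h1 x = 1 → Q.g l x = 1 := by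
    intro a l ha hal h1 x hx
    obtain _ | a := a
    · omega
    rw [Q.factor hal h1 x] at hx
    have h2 : C.trans (Q.jj_mono.monotone hal) (Q.g l x) = 1 := by
      apply hq a
      rw [hx, map_one]
    apply C.trans_injective hC (Q.jj_mono.monotone hal)
    rw [h2, map_one]
  have hker2 : ∀ (a l : ℕ), a ≤ l → ∀ (h1 : Q.ii a ≤ Q.ii (l + 1))
      (x : A.G (Q.ii (l + 1))), Q.g l x = 1 → A.trans h1 x = 1 := by
    intro a l hal h1 x hx
    rw [Q.factor hal h1 x, hx, map_one, map_one]
  have hkerQ : ∀ (a b l : ℕ), 1 ≤ a → a ≤ b → b ≤ l →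
      ∀ (h0 : Q.ii a ≤ Q.ii (l + 1)) (hk : Q.ii b ≤ Q.ii (l + 1))
      (x : A.G (Q.ii (l + 1))), A.trans h0 x = 1 → A.trans hk x = 1 := by
    intro a b l ha hab hbl h0 hk x hx
    exact hker2 b l hbl hk x (hker1 a l ha (hab.trans hbl) h0 x hx)
  -- image stability along the indices of `P`
  have him : ∀ (e l : ℕ), e ≤ l → ∀ (he : P.ii e ≤ P.ii (e + 1))
      (hl : P.ii e ≤ P.ii (l + 1)) (w : A.G (P.ii e)),
      (∃ u, A.trans he u = w) → ∃ v, A.trans hl v = w := by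
    intro e l hel he hl w hw
    obtain ⟨u, hu⟩ := hw
    have hsurj : Function.Surjective (⇑(B.trans (P.jj_mono.monotone hel)) ∘ ⇑(P.g l)) :=
      (B.trans_surjective hB _).comp (hg l)
    obtain ⟨v, hv⟩ := hsurj (B.trans (P.jj_mono.monotone (le_refl e)) (P.g e u))
    refine ⟨v, ?_⟩
    rw [P.factor hel hl v]
    show P.f e ((⇑(B.trans (P.jj_mono.monotone hel)) ∘ ⇑(P.g l)) v) = w
    rw [hv, ← hu, P.factor (le_refl e) he u]
  -- choose the auxiliary constant and the index sequence
  have hQ1 : 1 ≤ Q.ii 1 := Q.ii_mono.le_apply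
  set d : ℕ := P.ii (Q.ii 1 + 1) with hd
  have hd2 : 2 ≤ d := by
    have h2 : Q.ii 1 + 1 ≤ P.ii (Q.ii 1 + 1) := P.ii_mono.le_apply
    omega
  set s : ℕ → ℕ := fun k => Q.ii (stableIdx d k) with hsdef
  have hsmono : StrictMono s := Q.ii_mono.comp (stableIdx_mono (by omega))
  have hs0 : s 0 = Q.ii 1 := rfl
  have hkey : P.ii (s 0 + 1) ≤ s 1 := by
    have h1 : s 1 = Q.ii (d + 0 + 1) := rfl
    have h2 : d + 0 + 1 ≤ Q.ii (d + 0 + 1) := Q.ii_mono.le_apply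
    rw [h1, hs0]
    omega
  -- stability of images at the base level of `s`
  have himS : ∀ (c : ℕ), s 1 ≤ c → ∀ (h01 : s 0 ≤ s 1) (h0c : s 0 ≤ c) (y : A.G (s 0)),
      (∃ x, A.trans h01 x = y) → ∃ v, A.trans h0c v = y := by
    intro c hc h01 h0c y hy
    obtain ⟨x, hx⟩ := hy
    have h0e : s 0 ≤ P.ii (s 0) := P.ii_mono.le_apply
    have hie_s1 : P.ii (s 0) ≤ s 1 :=
      le_trans (P.ii_mono (Nat.lt_succ_self (s 0))).le hkey
    have heP : P.ii (s 0) ≤ P.ii (s 0 + 1) := P.ii_mono.monotone (Nat.le_succ _)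
    have hec : s 0 ≤ c := le_trans (hsmono Nat.zero_lt_one).le hc
    have hlP : P.ii (s 0) ≤ P.ii (c + 1) :=
      P.ii_mono.monotone (hec.trans (Nat.le_succ c))
    have hw1 : ∃ u, A.trans heP u = A.trans hie_s1 x := by
      refine ⟨A.trans hkey x, ?_⟩
      exact A.trans_trans_apply heP hkey x
    obtain ⟨v', hv'⟩ := him (s 0) c hec heP hlP (A.trans hie_s1 x) hw1
    have hcc : c ≤ P.ii (c + 1) := le_trans (Nat.le_succ c) P.ii_mono.le_apply
    refine ⟨A.trans hcc v', ?_⟩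
    calc A.trans h0c (A.trans hcc v') = A.trans (h0c.trans hcc) v' :=
          A.trans_trans_apply h0c hcc v'
      _ = A.trans h0e (A.trans hlP v') := (A.trans_trans_apply h0e hlP v').symm
      _ = A.trans h0e (A.trans hie_s1 x) := by rw [hv']
      _ = A.trans (h0e.trans hie_s1) x := A.trans_trans_apply h0e hie_s1 x
      _ = y := by rw [← hx]
  -- assemble
  apply stable_construct A s hsmono
  · -- image stability
    intro k h01 h0 y hy
    exact himS (s (k + 1)) (hsmono.monotone (Nat.succ_le_succ (Nat.zero_le k))) h01 h0 y hy
  · -- kernel stability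
    intro k h0 hk x hx
    exact hkerQ 1 (stableIdx d k) (d + k) (le_refl 1) (stableIdx_pos k)
      (stableIdx_le (by omega) k) h0 hk x hx
end

section
/- Let f : ℝ → ℝ be defined by f(x) = x/(1 + |x|), and regard [−1,1]² with the sup metric d̄ of the Euclidean metric on each factor as a compactification of ℝ² via the embedding f × f. Then [−1,1]² is NOT a controlled compactification of ℝ² with the Euclidean metric: there exist ε > 0 and R > 0 such that for every compact set C ⊆ ℝ² there is a subset B ⊆ ℝ² \ C of Euclidean diameter less than R with diam_{d̄}((f × f)(B)) ≥ ε. -/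
/-!
Near the horizontal axis the product compactification does not compress the second
coordinate: the points `(t, 0)` and `(t, 1)` are at Euclidean distance `1` and leave every
compact set as `t → ∞`, yet their images always differ by `f 1 - f 0 = 1/2` in the second
coordinate.
-/

open Filter Bornology

noncomputable def squashPlane (x : EuclideanSpace ℝ (Fin 2)) : ℝ × ℝ :=
  (x 0 / (1 + |x 0|), x 1 / (1 + |x 1|))

lemma tendsto_euclidean_pair_atTop_cobounded (c : ℝ) :
    Tendsto (fun t : ℝ => !₂[t, c]) atTop (cobounded (EuclideanSpace ℝ (Fin 2))) := by
  rw [← tendsto_norm_atTop_iff_cobounded]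
  refine tendsto_atTop_mono (fun t => ?_) tendsto_id
  calc t ≤ ‖t‖ := Real.le_norm_self t
    _ ≤ ‖!₂[t, c]‖ := by simpa using PiLp.norm_apply_le !₂[t, c] 0

lemma dist_euclidean_pair_same_fst (t a b : ℝ) : dist !₂[t, a] !₂[t, b] = dist a b := by
  simp [EuclideanSpace.dist_eq, Fin.sum_univ_two]

lemma dist_squashPlane_pair (t : ℝ) :
    dist (squashPlane !₂[t, 0]) (squashPlane !₂[t, 1]) = 1 / 2 := by
  rw [Prod.dist_eq]
  norm_num [squashPlane, Real.dist_eq]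

/-- For the map `F(x) = (f(x₀), f(x₁))` with `f(t) = t/(1+|t|)`, from the
Euclidean plane `EuclideanSpace ℝ (Fin 2)` to `ℝ × ℝ` (whose product metric is the sup
metric `d̄((a,b),(a',b')) = max (|a−a'|) (|b−b'|)`), there exist `ε > 0` and `R > 0` such
that for every compact `C ⊆ ℝ²` there is a subset `B ⊆ ℝ² \ C` of Euclidean diameter
less than `R` whose image has `d̄`-diameter at least `ε`. -/
theorem not_controlled_compactification_plane :
    ∃ ε : ℝ, 0 < ε ∧ ∃ R : ℝ, 0 < R ∧
      ∀ C : Set (EuclideanSpace ℝ (Fin 2)), IsCompact C →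
        ∃ B : Set (EuclideanSpace ℝ (Fin 2)), B ⊆ Cᶜ ∧
          EMetric.diam B < ENNReal.ofReal R ∧
          ε ≤ Metric.diam
            ((fun x : EuclideanSpace ℝ (Fin 2) =>
              ((x 0 / (1 + |x 0|), x 1 / (1 + |x 1|)) : ℝ × ℝ)) '' B) := by
  refine ⟨1 / 2, by norm_num, 2, by norm_num, fun C hC => ?_⟩
  obtain ⟨t, h0, h1⟩ :=
    (((tendsto_euclidean_pair_atTop_cobounded 0).eventually_mem hC.isBounded).and
      ((tendsto_euclidean_pair_atTop_cobounded 1).eventually_mem hC.isBounded)).exists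
  refine ⟨{!₂[t, 0], !₂[t, 1]}, Set.pair_subset h0 h1, ?_, ?_⟩
  · change Metric.ediam _ < _
    rw [Metric.ediam_pair, edist_dist, dist_euclidean_pair_same_fst]
    norm_num [Real.dist_eq]
  · rw [Set.image_pair, Metric.diam_pair]
    exact (dist_squashPlane_pair t).ge
end
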